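/- Assume (A1). If M is a Pareto-optimal menu, then M^+ = {φ^+}; that is, φ^+ ∈ M and φ^+ is the unique u_L-maximizing point of M. -/

import Mathlib

open Finset

noncomputable section

/-- The product CSP `x ⊗ y`. -/
def prodCSP {m n : ℕ} (x : Fin m → ℝ) (y : Fin n → ℝ) : Fin m × Fin n → ℝ :=
  fun p => x p.1 * y p.2

/-- The `j`-th vertex `e_j` of a simplex. -/
def pureVec {k : ℕ} (j : Fin k) : Fin k → ℝ := fun j' => if j' = j then 1 else 0

/-- Linear extension of a payoff to CSPs. -/
def linCSP {m n : ℕ} (u : Fin m → Fin n → ℝ) (φ : Fin m × Fin n → ℝ) : ℝ :=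
  ∑ p : Fin m × Fin n, φ p * u p.1 p.2

/-- Payoff the learner would get by always deviating to the pure action `j'`. -/
def devCSP {m n : ℕ} (u : Fin m → Fin n → ℝ) (φ : Fin m × Fin n → ℝ) (j' : Fin n) : ℝ :=
  ∑ p : Fin m × Fin n, φ p * u p.1 j'

/-- Bilinear extension of a payoff to mixed strategies. -/
def mixPay {m n : ℕ} (u : Fin m → Fin n → ℝ) (x : Fin m → ℝ) (y : Fin n → ℝ) : ℝ :=
  ∑ i, ∑ j, x i * y j * u i j

/-- Pure best responses of the learner to the optimizer mixed strategy `x`. -/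
def BRL {m n : ℕ} (u : Fin m → Fin n → ℝ) (x : Fin m → ℝ) : Set (Fin n) :=
  {j | ∀ j' : Fin n, (∑ i, x i * u i j') ≤ ∑ i, x i * u i j}

/-- A CSP is no-regret. -/
def NoRegret {m n : ℕ} (u : Fin m → Fin n → ℝ) (φ : Fin m × Fin n → ℝ) : Prop :=
  ∀ j' : Fin n, devCSP u φ j' ≤ linCSP u φ

/-- A CSP is no-swap-regret. -/
def NoSwapRegret {m n : ℕ} (u : Fin m → Fin n → ℝ) (φ : Fin m × Fin n → ℝ) : Prop :=
  ∀ j j' : Fin n, (∑ i, φ (i, j) * u i j') ≤ ∑ i, φ (i, j) * u i j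

/-- The no-regret menu: all no-regret CSPs. -/
def MNR {m n : ℕ} (u : Fin m → Fin n → ℝ) : Set (Fin m × Fin n → ℝ) :=
  {φ | φ ∈ stdSimplex ℝ (Fin m × Fin n) ∧ NoRegret u φ}

/-- The no-swap-regret menu: all no-swap-regret CSPs. -/
def MNSR {m n : ℕ} (u : Fin m → Fin n → ℝ) : Set (Fin m × Fin n → ℝ) :=
  {φ | φ ∈ stdSimplex ℝ (Fin m × Fin n) ∧ NoSwapRegret u φ}

/-- A menu: a closed convex subset of the simplex of CSPs such that every optimizer
mixed strategy has some product response inside the set. -/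
def IsMenu {m n : ℕ} (M : Set (Fin m × Fin n → ℝ)) : Prop :=
  IsClosed M ∧ Convex ℝ M ∧ M ⊆ stdSimplex ℝ (Fin m × Fin n) ∧
    ∀ x ∈ stdSimplex ℝ (Fin m), ∃ y ∈ stdSimplex ℝ (Fin n), prodCSP x y ∈ M

/-- The learner's value when the optimizer with payoff `uO` picks their favorite point
of the menu `M`, breaking ties in the learner's favor. -/
def VL {m n : ℕ} (uL uO : Fin m → Fin n → ℝ) (M : Set (Fin m × Fin n → ℝ)) : ℝ :=
  sSup (linCSP uL '' {φ ∈ M | ∀ ψ ∈ M, linCSP uO ψ ≤ linCSP uO φ})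

/-- `M'` Pareto-dominates `M` (for the learner payoff `uL`). -/
def ParetoDominates {m n : ℕ} (uL : Fin m → Fin n → ℝ)
    (M' M : Set (Fin m × Fin n → ℝ)) : Prop :=
  (∀ uO : Fin m → Fin n → ℝ, VL uL uO M ≤ VL uL uO M') ∧
    ∃ uO : Fin m → Fin n → ℝ, VL uL uO M < VL uL uO M'

/-- A menu is Pareto-optimal if it is a menu and no menu Pareto-dominates it. -/
def ParetoOptimal {m n : ℕ} (uL : Fin m → Fin n → ℝ) (M : Set (Fin m × Fin n → ℝ)) : Prop :=
  IsMenu M ∧ ∀ M' : Set (Fin m × Fin n → ℝ), IsMenu M' → ¬ ParetoDominates uL M' M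

/-- (A2): no weakly dominated learner actions. -/
def A2cond {m n : ℕ} (u : Fin m → Fin n → ℝ) : Prop :=
  ∀ j : Fin n, (∃ x ∈ stdSimplex ℝ (Fin m), j ∈ BRL u x) →
    ∃ x' ∈ stdSimplex ℝ (Fin m), BRL u x' = {j}

/-- `U^-(M)`: the minimal learner utility over `M`. -/
def UminusVal {m n : ℕ} (u : Fin m → Fin n → ℝ) (M : Set (Fin m × Fin n → ℝ)) : ℝ :=
  sInf (linCSP u '' M)

/-- `U^+(M)`: the maximal learner utility over `M`. -/
def UplusVal {m n : ℕ} (u : Fin m → Fin n → ℝ) (M : Set (Fin m × Fin n → ℝ)) : ℝ :=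
  sSup (linCSP u '' M)

/-- `M^-`: the set of learner-utility-minimizing points of `M`. -/
def MminusSet {m n : ℕ} (u : Fin m → Fin n → ℝ) (M : Set (Fin m × Fin n → ℝ)) :
    Set (Fin m × Fin n → ℝ) :=
  {φ ∈ M | linCSP u φ = UminusVal u M}

/-- `M^+`: the set of learner-utility-maximizing points of `M`. -/
def MplusSet {m n : ℕ} (u : Fin m → Fin n → ℝ) (M : Set (Fin m × Fin n → ℝ)) :
    Set (Fin m × Fin n → ℝ) :=
  {φ ∈ M | linCSP u φ = UplusVal u M}

/-- The zero-sum value `U_ZS = min_x max_y u_L(x,y)`. -/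
def UZSval {m n : ℕ} (u : Fin m → Fin n → ℝ) : ℝ :=
  sInf ((fun x => sSup ((fun y => mixPay u x y) '' stdSimplex ℝ (Fin n))) ''
    stdSimplex ℝ (Fin m))

/-! If `φ⁺` were missing from `M`, then `M' = convexJoin {φ⁺} M` would still be a menu. Since the
optimizer's payoff is linear, its maximum over `M'` is attained either at `φ⁺`, which is the
learner's best point, or already on `M`, whose optimal points stay optimal in `M'`; so no optimizer
does worse against `M'`. An optimizer sharing the learner's payoff does strictly better, because
`φ⁺` beats every point of `M`. This contradicts Pareto-optimality, and once `φ⁺ ∈ M` it is the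
only learner-maximizing point since it is the unique maximizer on the whole simplex. -/

theorem IsCompact.convexJoin {E : Type*} [AddCommGroup E] [Module ℝ E] [TopologicalSpace E]
    [IsTopologicalAddGroup E] [ContinuousSMul ℝ E] {s t : Set E}
    (hs : IsCompact s) (ht : IsCompact t) : IsCompact (convexJoin ℝ s t) := by
  have hjoin : _root_.convexJoin ℝ s t =
      (fun q : E × E × ℝ => q.1 + q.2.2 • (q.2.1 - q.1)) '' (s ×ˢ t ×ˢ Set.Icc 0 1) := by
    ext z
    simp only [mem_convexJoin, segment_eq_image', Set.mem_image, Set.mem_prod, Prod.exists]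
    constructor
    · rintro ⟨a, ha, b, hb, θ, hθ, rfl⟩
      exact ⟨a, b, θ, ⟨ha, hb, hθ⟩, rfl⟩
    · rintro ⟨a, b, θ, ⟨ha, hb, hθ⟩, rfl⟩
      exact ⟨a, ha, b, hb, θ, hθ, rfl⟩
  rw [hjoin]
  exact (hs.prod (ht.prod isCompact_Icc)).image (by fun_prop)

theorem sum_mul_le_of_mem_stdSimplex {ι : Type*} [Fintype ι] {w g : ι → ℝ} {c : ℝ}
    (hw : w ∈ stdSimplex ℝ ι) (hg : ∀ i, g i ≤ c) : ∑ i, w i * g i ≤ c :=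
  calc ∑ i, w i * g i ≤ ∑ i, w i * c :=
        sum_le_sum fun i _ => mul_le_mul_of_nonneg_left (hg i) (hw.1 i)
    _ = c := by rw [← sum_mul, hw.2, one_mul]

theorem eq_single_of_le_sum_mul {ι : Type*} [Fintype ι] [DecidableEq ι] {w g : ι → ℝ} {a : ι}
    (hw : w ∈ stdSimplex ℝ ι) (hg : ∀ i ≠ a, g i < g a) (h : g a ≤ ∑ i, w i * g i) :
    w = Pi.single a 1 := by
  have hoff : ∀ i ≠ a, w i = 0 := by
    intro i hia
    by_contra hwi
    have hlt : ∑ j, w j * g j < ∑ j, w j * g a := by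
      refine sum_lt_sum (fun j _ => ?_) ⟨i, mem_univ i, ?_⟩
      · rcases eq_or_ne j a with rfl | hja
        · exact le_rfl
        · exact mul_le_mul_of_nonneg_left (hg j hja).le (hw.1 j)
      · exact mul_lt_mul_of_pos_left (hg i hia) ((hw.1 i).lt_of_ne' hwi)
    rw [← sum_mul, hw.2, one_mul] at hlt
    linarith
  have hwa : w a = 1 := by
    rw [← hw.2, sum_eq_single a (fun i _ hia => hoff i hia) (by simp)]
  ext i
  rcases eq_or_ne i a with rfl | hia
  · simp [hwa]
  · simp [hoff i hia, hia]

section CSP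

variable {m n : ℕ}

theorem prodCSP_pureVec (i : Fin m) (j : Fin n) :
    prodCSP (pureVec i) (pureVec j) = Pi.single (i, j) 1 := by
  ext ⟨i', j'⟩
  by_cases hi : i' = i <;> by_cases hj : j' = j <;>
    simp [prodCSP, pureVec, hi, hj]

theorem linCSP_single (u : Fin m → Fin n → ℝ) (p : Fin m × Fin n) :
    linCSP u (Pi.single p 1) = u p.1 p.2 := by
  simp [linCSP, Pi.single_apply]

theorem linCSP_le_linCSP_single {u : Fin m → Fin n → ℝ} {p : Fin m × Fin n}
    (hu : ∀ q, q ≠ p → u q.1 q.2 < u p.1 p.2) {ψ : Fin m × Fin n → ℝ}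
    (hψ : ψ ∈ stdSimplex ℝ (Fin m × Fin n)) : linCSP u ψ ≤ linCSP u (Pi.single p 1) := by
  rw [linCSP_single]
  refine sum_mul_le_of_mem_stdSimplex hψ fun q => ?_
  rcases eq_or_ne q p with rfl | hq
  exacts [le_rfl, (hu q hq).le]

theorem eq_single_of_linCSP_single_le {u : Fin m → Fin n → ℝ} {p : Fin m × Fin n}
    (hu : ∀ q, q ≠ p → u q.1 q.2 < u p.1 p.2) {ψ : Fin m × Fin n → ℝ}
    (hψ : ψ ∈ stdSimplex ℝ (Fin m × Fin n)) (hle : linCSP u (Pi.single p 1) ≤ linCSP u ψ) :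
    ψ = Pi.single p 1 :=
  eq_single_of_le_sum_mul hψ hu ((linCSP_single u p).symm.trans_le hle)

def linCSPₗ (u : Fin m → Fin n → ℝ) : (Fin m × Fin n → ℝ) →ₗ[ℝ] ℝ where
  toFun := linCSP u
  map_add' φ ψ := by simp only [linCSP, Pi.add_apply, add_mul, sum_add_distrib]
  map_smul' c φ := by simp only [linCSP, Pi.smul_apply, smul_eq_mul, mul_assoc, ← mul_sum,
    RingHom.id_apply]

theorem continuous_linCSP (u : Fin m → Fin n → ℝ) : Continuous (linCSP u) :=
  (linCSPₗ u).continuous_of_finiteDimensional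

theorem linCSP_le_max_of_mem_convexJoin {u : Fin m → Fin n → ℝ} {φ z : Fin m × Fin n → ℝ}
    {S : Set (Fin m × Fin n → ℝ)} {c : ℝ} (hS : ∀ ψ ∈ S, linCSP u ψ ≤ c)
    (hz : z ∈ convexJoin ℝ {φ} S) : linCSP u z ≤ max (linCSP u φ) c := by
  obtain ⟨y, hy, hzy⟩ := ((linCSPₗ u).convexOn convex_univ).exists_ge_of_mem_convexHull
    (Set.subset_univ _) (convexJoin_subset_convexHull _ _ hz)
  rcases hy with rfl | hy
  · exact le_max_of_le_left hzy
  · exact le_max_of_le_right (hzy.trans (hS y hy))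

def optimalSet (uO : Fin m → Fin n → ℝ) (S : Set (Fin m × Fin n → ℝ)) :
    Set (Fin m × Fin n → ℝ) :=
  {φ ∈ S | ∀ ψ ∈ S, linCSP uO ψ ≤ linCSP uO φ}

theorem VL_eq_sSup_optimalSet (uL uO : Fin m → Fin n → ℝ) (S : Set (Fin m × Fin n → ℝ)) :
    VL uL uO S = sSup (linCSP uL '' optimalSet uO S) := rfl

theorem optimalSet_nonempty (uO : Fin m → Fin n → ℝ) {S : Set (Fin m × Fin n → ℝ)}
    (hK : IsCompact S) (hne : S.Nonempty) : (optimalSet uO S).Nonempty := by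
  obtain ⟨φ, hφ, hmax⟩ := hK.exists_isMaxOn hne (continuous_linCSP uO).continuousOn
  exact ⟨φ, hφ, fun ψ hψ => hmax hψ⟩

theorem VL_self_eq_of_forall_le {u : Fin m → Fin n → ℝ} {S : Set (Fin m × Fin n → ℝ)}
    {φ : Fin m × Fin n → ℝ} (hφ : φ ∈ S) (hmax : ∀ ψ ∈ S, linCSP u ψ ≤ linCSP u φ) :
    VL u u S = linCSP u φ := by
  have hval : linCSP u '' optimalSet u S = {linCSP u φ} := by
    refine Set.eq_singleton_iff_unique_mem.mpr ⟨⟨φ, ⟨hφ, hmax⟩, rfl⟩, ?_⟩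
    rintro _ ⟨ψ, ⟨hψ, hψmax⟩, rfl⟩
    exact le_antisymm (hmax ψ hψ) (hψmax φ hφ)
  rw [VL_eq_sSup_optimalSet, hval, csSup_singleton]

theorem VL_le_VL_convexJoin (uL uO : Fin m → Fin n → ℝ) {M : Set (Fin m × Fin n → ℝ)}
    (hK : IsCompact M) (hne : M.Nonempty) {φ : Fin m × Fin n → ℝ}
    (hφ : ∀ ψ ∈ M, linCSP uL ψ ≤ linCSP uL φ) :
    VL uL uO M ≤ VL uL uO (convexJoin ℝ {φ} M) := by
  set M' := convexJoin ℝ {φ} M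
  have hbdd : BddAbove (linCSP uL '' optimalSet uO M') :=
    ((isCompact_singleton.convexJoin hK).image (continuous_linCSP uL)).bddAbove.mono
      (Set.image_mono (Set.sep_subset _ _))
  obtain ⟨χ, hχM, hχmax⟩ := optimalSet_nonempty uO hK hne
  have hM' : ∀ z ∈ M', linCSP uO z ≤ max (linCSP uO φ) (linCSP uO χ) :=
    fun z hz => linCSP_le_max_of_mem_convexJoin hχmax hz
  rw [VL_eq_sSup_optimalSet, VL_eq_sSup_optimalSet]
  rcases le_or_gt (linCSP uO χ) (linCSP uO φ) with hφχ | hχφ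
  · have hφopt : φ ∈ optimalSet uO M' :=
      ⟨subset_convexJoin_left hne (Set.mem_singleton φ),
        fun z hz => (hM' z hz).trans (max_eq_left hφχ).le⟩
    calc sSup (linCSP uL '' optimalSet uO M)
        ≤ linCSP uL φ := csSup_le ((optimalSet_nonempty uO hK hne).image _)
          (Set.forall_mem_image.mpr fun ψ hψ => hφ ψ hψ.1)
      _ ≤ sSup (linCSP uL '' optimalSet uO M') := le_csSup hbdd ⟨φ, hφopt, rfl⟩
  · have hsub : optimalSet uO M ⊆ optimalSet uO M' := fun ψ ⟨hψM, hψmax⟩ =>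
      ⟨subset_convexJoin_right (Set.singleton_nonempty φ) hψM, fun z hz =>
        (hM' z hz).trans ((max_le hχφ.le le_rfl).trans (hψmax χ hχM))⟩
    exact csSup_le_csSup hbdd ((optimalSet_nonempty uO hK hne).image _) (Set.image_mono hsub)

theorem VL_self_lt_VL_convexJoin (u : Fin m → Fin n → ℝ) {M : Set (Fin m × Fin n → ℝ)}
    (hK : IsCompact M) (hne : M.Nonempty) {φ : Fin m × Fin n → ℝ}
    (hφ : ∀ ψ ∈ M, linCSP u ψ < linCSP u φ) :
    VL u u M < VL u u (convexJoin ℝ {φ} M) := by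
  obtain ⟨χ, hχM, hχmax⟩ := optimalSet_nonempty u hK hne
  have hφmax : ∀ z ∈ convexJoin ℝ {φ} M, linCSP u z ≤ linCSP u φ := fun z hz =>
    (linCSP_le_max_of_mem_convexJoin (fun ψ hψ => (hφ ψ hψ).le) hz).trans (max_self _).le
  rw [VL_self_eq_of_forall_le hχM hχmax,
    VL_self_eq_of_forall_le (subset_convexJoin_left hne (Set.mem_singleton φ)) hφmax]
  exact hφ χ hχM

theorem MplusSet_eq_singleton {u : Fin m → Fin n → ℝ} {M : Set (Fin m × Fin n → ℝ)}
    {φ : Fin m × Fin n → ℝ} (hφ : φ ∈ M) (hmax : ∀ ψ ∈ M, linCSP u ψ ≤ linCSP u φ)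
    (huniq : ∀ ψ ∈ M, linCSP u φ ≤ linCSP u ψ → ψ = φ) : MplusSet u M = {φ} := by
  have hU : UplusVal u M = linCSP u φ :=
    IsGreatest.csSup_eq ⟨⟨φ, hφ, rfl⟩, Set.forall_mem_image.mpr hmax⟩
  ext ψ
  simp only [MplusSet, hU, Set.mem_sep_iff, Set.mem_singleton_iff]
  constructor
  · rintro ⟨hψ, hψφ⟩
    exact huniq ψ hψ hψφ.ge
  · rintro rfl
    exact ⟨hφ, rfl⟩

theorem IsMenu.subset_stdSimplex {M : Set (Fin m × Fin n → ℝ)} (hM : IsMenu M) :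
    M ⊆ stdSimplex ℝ (Fin m × Fin n) :=
  hM.2.2.1

theorem IsMenu.isCompact {M : Set (Fin m × Fin n → ℝ)} (hM : IsMenu M) : IsCompact M :=
  (isCompact_stdSimplex ℝ _).of_isClosed_subset hM.1 hM.subset_stdSimplex

theorem IsMenu.nonempty {M : Set (Fin m × Fin n → ℝ)} (hM : IsMenu M) (i : Fin m) :
    M.Nonempty := by
  obtain ⟨y, -, hxy⟩ := hM.2.2.2 (Pi.single i 1) (single_mem_stdSimplex ℝ i)
  exact ⟨_, hxy⟩

theorem IsMenu.convexJoin {M : Set (Fin m × Fin n → ℝ)} (hM : IsMenu M)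
    {φ : Fin m × Fin n → ℝ} (hφ : φ ∈ stdSimplex ℝ (Fin m × Fin n)) :
    IsMenu (convexJoin ℝ {φ} M) := by
  have hK := hM.isCompact
  obtain ⟨-, hconv, hsub, hresp⟩ := hM
  refine ⟨(isCompact_singleton.convexJoin hK).isClosed,
    (convex_singleton φ).convexJoin hconv,
    convexJoin_subset (Set.singleton_subset_iff.mpr hφ) hsub (convex_stdSimplex ℝ _),
    fun x hx => ?_⟩
  obtain ⟨y, hy, hxy⟩ := hresp x hx
  exact ⟨y, hy, subset_convexJoin_right (Set.singleton_nonempty φ) hxy⟩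

end CSP

theorem pareto_optimal_menu_max_set_general
    (m n : ℕ)
    (uL : Fin m → Fin n → ℝ)
    (istar : Fin m) (jstar : Fin n)
    (hA1 : ∀ p : Fin m × Fin n, p ≠ (istar, jstar) → uL p.1 p.2 < uL istar jstar)
    (M : Set (Fin m × Fin n → ℝ)) (hPO : ParetoOptimal uL M) :
    MplusSet uL M = {prodCSP (pureVec istar) (pureVec jstar)} := by
  obtain ⟨hM, hundominated⟩ := hPO
  rw [prodCSP_pureVec]
  have hmax : ∀ ψ ∈ M, linCSP uL ψ ≤ linCSP uL (Pi.single (istar, jstar) 1) :=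
    fun ψ hψ => linCSP_le_linCSP_single hA1 (hM.subset_stdSimplex hψ)
  have huniq : ∀ ψ ∈ M, linCSP uL (Pi.single (istar, jstar) 1) ≤ linCSP uL ψ →
      ψ = Pi.single (istar, jstar) 1 :=
    fun ψ hψ => eq_single_of_linCSP_single_le hA1 (hM.subset_stdSimplex hψ)
  have hmem : Pi.single (istar, jstar) 1 ∈ M := by
    by_contra hnot
    have hlt : ∀ ψ ∈ M, linCSP uL ψ < linCSP uL (Pi.single (istar, jstar) 1) := fun ψ hψ =>
      (hmax ψ hψ).lt_of_ne fun heq => hnot (huniq ψ hψ heq.ge ▸ hψ)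
    exact hundominated _ (hM.convexJoin (single_mem_stdSimplex ℝ _))
      ⟨fun uO => VL_le_VL_convexJoin uL uO hM.isCompact (hM.nonempty istar) hmax,
        uL, VL_self_lt_VL_convexJoin uL hM.isCompact (hM.nonempty istar) hlt⟩
  exact MplusSet_eq_singleton hmem hmax huniq

/-- Assume (A1). Every Pareto-optimal menu has `M^+ = {φ^+}`, where
`φ^+ = e_{i*} ⊗ e_{j*}` is the unique learner-optimal pure profile. -/
theorem pareto_optimal_menu_max_set
    (m n : ℕ) (hm : 0 < m) (hn : 0 < n)
    (uL : Fin m → Fin n → ℝ) (hbound : ∀ i j, uL i j ∈ Set.Icc (-1 : ℝ) 1)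
    (istar : Fin m) (jstar : Fin n)
    (hA1 : ∀ p : Fin m × Fin n, p ≠ (istar, jstar) → uL p.1 p.2 < uL istar jstar)
    (M : Set (Fin m × Fin n → ℝ)) (hPO : ParetoOptimal uL M) :
    MplusSet uL M = {prodCSP (pureVec istar) (pureVec jstar)} :=
  pareto_optimal_menu_max_set_general m n uL istar jstar hA1 M hPO
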